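/- arXiv:math/0512009 — 2 statements merged into one kernel-verified Lean document; each statement's English description precedes it below -/
import Mathlib

section
/- In dimension d ≥ 2, any nonempty finite set S of k occupied sites in Z^d has at least √k elements that have at least one empty nearest neighbor (a neighbor in Z^d \ S). -/
/-!
Following the line through `x ∈ S` in the `i`-th coordinate direction up to its last site in `S`
gives a site `t` with an empty neighbour that agrees with `x` off coordinate `i`. Doing this for
two different directions `i ≠ j` yields two such sites that together determine `x`, so
`x ↦ (tᵢ(x), tⱼ(x))` embeds `S` into `B × B`, where `B` is the set of sites with an empty
neighbour. Hence `|S| ≤ |B|²`.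
-/

open Finset

variable {ι : Type*} [Fintype ι]

def HasEmptyNeighbor (S : Finset (ι → ℤ)) (x : ι → ℤ) : Prop :=
  ∃ y : ι → ℤ, (∑ i, |x i - y i|) = 1 ∧ y ∉ S

lemma sum_abs_sub_update_add_one [DecidableEq ι] (x : ι → ℤ) (i : ι) :
    ∑ j, |x j - Function.update x i (x i + 1) j| = 1 := by
  rw [sum_eq_single_of_mem i (mem_univ i)]
  · simp
  · intro j _ hj
    simp [Function.update_of_ne hj]

lemma exists_hasEmptyNeighbor_forall_ne_eq (S : Finset (ι → ℤ)) {x : ι → ℤ} (hx : x ∈ S)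
    (i : ι) : ∃ t ∈ S, HasEmptyNeighbor S t ∧ ∀ j ≠ i, t j = x j := by
  classical
  obtain ⟨t, htC, hmax⟩ :=
    (S.filter fun y => ∀ j ≠ i, y j = x j).exists_max_image (· i) ⟨x, by simp [hx]⟩
  rw [mem_filter] at htC
  refine ⟨t, htC.1, ⟨_, sum_abs_sub_update_add_one t i, fun hu => ?_⟩, htC.2⟩
  have := hmax _ <| mem_filter.2
    ⟨hu, fun j hj => by rw [Function.update_of_ne hj]; exact htC.2 j hj⟩
  simp at this

theorem card_le_card_filter_hasEmptyNeighbor_sq (S : Finset (ι → ℤ))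
    [DecidablePred (HasEmptyNeighbor S)] {i j : ι} (hij : i ≠ j) :
    #S ≤ #(S.filter (HasEmptyNeighbor S)) ^ 2 := by
  choose! a haS ha hai using fun x (hx : x ∈ S) => exists_hasEmptyNeighbor_forall_ne_eq S hx i
  choose! b hbS hb hbj using fun x (hx : x ∈ S) => exists_hasEmptyNeighbor_forall_ne_eq S hx j
  rw [sq, ← card_product]
  refine card_le_card_of_injOn (fun x => (a x, b x))
    (fun x hx => mem_product.2 ⟨mem_filter.2 ⟨haS x hx, ha x hx⟩,
      mem_filter.2 ⟨hbS x hx, hb x hx⟩⟩) ?_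
  intro x hx x' hx' h
  obtain ⟨hax, hbx⟩ := Prod.mk.inj h
  funext k
  by_cases hk : k = i
  · subst hk
    rw [← hbj x hx k hij, ← hbj x' hx' k hij, hbx]
  · rw [← hai x hx k hk, ← hai x' hx' k hk, hax]

open Classical in
theorem stmt_10_general (d : ℕ) (hd : 2 ≤ d) (S : Finset (Fin d → ℤ)) :
    Real.sqrt (S.card : ℝ) ≤
      ((S.filter (fun x => ∃ y : Fin d → ℤ,
        (∑ i : Fin d, |x i - y i|) = 1 ∧ y ∉ S)).card : ℝ) := by
  have hcard := card_le_card_filter_hasEmptyNeighbor_sq S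
    (i := ⟨0, by omega⟩) (j := ⟨1, by omega⟩) (by simp)
  exact Real.sqrt_le_iff.2 ⟨by positivity, by exact_mod_cast hcard⟩

open Classical in
/-- In dimension d ≥ 2, any nonempty finite set S of k occupied sites
in ℤ^d has at least √k elements having at least one nearest neighbor (ℓ¹-distance 1)
outside of S. -/
theorem stmt_10 (d : ℕ) (hd : 2 ≤ d) (S : Finset (Fin d → ℤ)) (hS : S.Nonempty) :
    Real.sqrt (S.card : ℝ) ≤
      ((S.filter (fun x => ∃ y : Fin d → ℤ,
        (∑ i : Fin d, |x i - y i|) = 1 ∧ y ∉ S)).card : ℝ) :=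
  stmt_10_general d hd S
end

section
/- Let X have a gamma distribution with shape parameter k = 2C_1 log(t + C_3 log t) and rate parameter 2λ (i.e., X is a sum of exponential waiting times, with moment generating function E[e^{θX}] = (2λ/(2λ-θ))^k for 0 < θ < 2λ). If C_3 is chosen so that λC_3 - 4C_1 ≥ 2, then for all sufficiently large t, P(X > C_3 log t) ≤ t^{-2}. -/
open MeasureTheory ProbabilityTheory Real

/-!
Chernoff's bound at `θ = λ`, half the rate, gives `P(X > C₃ log t) ≤ e^{-λ C₃ log t} 2^k`.
Since `t + C₃ log t ≤ t²` for large `t`, the shape satisfies `k ≤ 4 C₁ log t`, and `2 ≤ e`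
turns `2^k` into at most `t^{4 C₁}`; the hypothesis `λ C₃ - 4 C₁ ≥ 2` finishes the estimate.
-/

theorem ProbabilityTheory.measure_lt_le_ofReal_exp_mul_mgf {Ω : Type*} [MeasurableSpace Ω]
    {μ : Measure Ω} [IsFiniteMeasure μ] {X : Ω → ℝ} {θ : ℝ} (a : ℝ) (hθ : 0 ≤ θ)
    (hint : Integrable (fun ω => exp (θ * X ω)) μ) :
    μ {ω | a < X ω} ≤ ENNReal.ofReal (exp (-θ * a) * mgf X μ θ) :=
  calc μ {ω | a < X ω} ≤ μ {ω | a ≤ X ω} := measure_mono <| Set.ofPred_subset_ofPred.mpr fun _ => le_of_lt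
    _ = ENNReal.ofReal (μ.real {ω | a ≤ X ω}) := (ofReal_measureReal).symm
    _ ≤ _ := ENNReal.ofReal_le_ofReal (measure_ge_le_exp_mul_mgf a hθ hint)

theorem Real.two_rpow_le_of_le_log {s u : ℝ} (hs : 0 ≤ s) (hu : 0 < u) (hsu : s ≤ log u) :
    (2 : ℝ) ^ s ≤ u :=
  calc (2 : ℝ) ^ s ≤ exp 1 ^ s := by
        gcongr
        linarith [add_one_le_exp (1 : ℝ)]
    _ = exp s := exp_one_rpow s
    _ ≤ u := (le_log_iff_exp_le hu).mp hsu

theorem Real.log_add_mul_log_le_two_mul_log {c t : ℝ} (hc : 0 ≤ c) (ht : 1 + c ≤ t) :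
    log (t + c * log t) ≤ 2 * log t := by
  have ht0 : 0 < t := by linarith
  have hlog : 0 ≤ log t := log_nonneg (by linarith)
  have hlog_le : log t ≤ t - 1 := log_le_sub_one_of_pos ht0
  have hsq : t + c * log t ≤ t ^ 2 := by nlinarith
  calc log (t + c * log t) ≤ log (t ^ 2) := log_le_log (by positivity) hsq
    _ = 2 * log t := by rw [log_pow]; norm_num

theorem stmt_13_general (C1 C3 lam : ℝ) (hC1 : 0 < C1) (hlam : 0 < lam)
    (h : 2 ≤ lam * C3 - 4 * C1) :
    ∃ t0 : ℝ, ∀ t : ℝ, t0 ≤ t →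
      ∀ (Ω : Type) [MeasurableSpace Ω] (P : Measure Ω), IsProbabilityMeasure P →
        ∀ X : Ω → ℝ, Measurable X → (∀ ω, 0 ≤ X ω) →
          Integrable (fun ω => Real.exp (lam * X ω)) P →
          (∀ θ ∈ Set.Ioo (0 : ℝ) (2 * lam),
            mgf X P θ = (2 * lam / (2 * lam - θ)) ^ (2 * C1 * Real.log (t + C3 * Real.log t))) →
          P {ω | C3 * Real.log t < X ω} ≤ ENNReal.ofReal (t ^ (-(2 : ℝ))) := by
  have hC3 : 0 ≤ C3 := (pos_of_mul_pos_right (by linarith) hlam.le).le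
  refine ⟨1 + C3, fun t ht Ω _ P _ X _ _ hint hmgf => ?_⟩
  have ht0 : 0 < t := by linarith
  have hlog : 0 ≤ log t := log_nonneg (by linarith)
  set L := log (t + C3 * log t)
  have hmgf_lam : mgf X P lam = (2 : ℝ) ^ (2 * C1 * L) := by
    rw [hmgf lam ⟨hlam, by linarith⟩, show 2 * lam - lam = lam by ring,
      mul_div_assoc, div_self hlam.ne', mul_one]
  have hexp : exp (-lam * (C3 * log t)) = t ^ (-(lam * C3)) := by
    rw [rpow_def_of_pos ht0]; ring_nf
  have hshape : (2 : ℝ) ^ (2 * C1 * L) ≤ t ^ (4 * C1) := by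
    have hL : L ≤ 2 * log t := log_add_mul_log_le_two_mul_log hC3 ht
    refine two_rpow_le_of_le_log ?_ (by positivity) ?_
    · have : 0 ≤ L := log_nonneg (by nlinarith)
      positivity
    · rw [log_rpow ht0]; nlinarith
  calc P {ω | C3 * log t < X ω}
      ≤ ENNReal.ofReal (exp (-lam * (C3 * log t)) * mgf X P lam) :=
        measure_lt_le_ofReal_exp_mul_mgf _ hlam.le hint
    _ ≤ ENNReal.ofReal (t ^ (-(lam * C3)) * t ^ (4 * C1)) := by
        rw [hmgf_lam, hexp]; gcongr
    _ ≤ ENNReal.ofReal (t ^ (-(2 : ℝ))) := by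
        rw [← rpow_add ht0]
        exact ENNReal.ofReal_le_ofReal (rpow_le_rpow_of_exponent_le (by linarith) (by linarith))

/-- Let X have a gamma distribution with shape k(t) = 2C₁ log(t + C₃ log t)
and rate 2λ, in the sense that E[e^{θX}] = (2λ/(2λ-θ))^{k(t)} for 0 < θ < 2λ.
If λC₃ - 4C₁ ≥ 2, then for all sufficiently large t, P(X > C₃ log t) ≤ t⁻². -/
theorem stmt_13 (C1 C3 lam : ℝ) (hC1 : 0 < C1) (hC3 : 0 < C3) (hlam : 0 < lam)
    (h : 2 ≤ lam * C3 - 4 * C1) :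
    ∃ t0 : ℝ, ∀ t : ℝ, t0 ≤ t →
      ∀ (Ω : Type) [MeasurableSpace Ω] (P : Measure Ω), IsProbabilityMeasure P →
        ∀ X : Ω → ℝ, Measurable X → (∀ ω, 0 ≤ X ω) →
          Integrable (fun ω => Real.exp (lam * X ω)) P →
          (∀ θ ∈ Set.Ioo (0 : ℝ) (2 * lam),
            mgf X P θ = (2 * lam / (2 * lam - θ)) ^ (2 * C1 * Real.log (t + C3 * Real.log t))) →
          P {ω | C3 * Real.log t < X ω} ≤ ENNReal.ofReal (t ^ (-(2 : ℝ))) :=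
  stmt_13_general C1 C3 lam hC1 hlam h
end
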